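/- Let a, b, g, h ∈ ℝ and N ∈ ℝ with N ≠ 0 (a is the previous natural parameter, b the prior natural parameter, g and h the first and second derivatives of the data loss at a). Suppose the denominator D = 1/cosh(a)² + 2·tanh(a)·g + h is nonzero. If λ ∈ ℝ satisfies the linearized stationarity equation λ - a = -[ cosh(a)²·g + (λ - a)·( cosh(a)²·h + 2·sinh(a)·cosh(a)·g ) ] - (a - b)/N, obtained by replacing cosh(x)²·L'(x) in the exact stationarity condition by its first-order Taylor expansion around a, then λ is uniquely determined and equals λ = a - [ g + (a - b)/(N·cosh(a)²) ] / [ 1/cosh(a)² + 2·tanh(a)·g + h ]. This is the memory-limited second-order asymmetric update for a binary synapse. -/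

import Mathlib

/-- Memory-limited second-order asymmetric update for a binary synapse: if `λ`
satisfies the linearized stationarity equation (first-order Taylor expansion of
`cosh(x)²·L'(x)` around `a`) and the denominator is nonzero, then `λ` equals the
closed-form update. -/
theorem second_order_asymmetric_update (a b g h N lam : ℝ) (hN : N ≠ 0)
    (hD : 1 / Real.cosh a ^ 2 + 2 * Real.tanh a * g + h ≠ 0)
    (hstat : lam - a =
      -(Real.cosh a ^ 2 * g +
          (lam - a) * (Real.cosh a ^ 2 * h + 2 * Real.sinh a * Real.cosh a * g))
        - (a - b) / N) :
    lam = a - (g + (a - b) / (N * Real.cosh a ^ 2)) /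
        (1 / Real.cosh a ^ 2 + 2 * Real.tanh a * g + h) := by
  have hc : Real.cosh a ≠ 0 := (Real.cosh_pos a).ne'
  have key : (lam - a) * (1 / Real.cosh a ^ 2 + 2 * Real.tanh a * g + h)
      = -(g + (a - b) / (N * Real.cosh a ^ 2)) := by
    rw [Real.tanh_eq_sinh_div_cosh]
    field_simp at hstat ⊢
    linear_combination hstat
  have h2 : lam - a = -((g + (a - b) / (N * Real.cosh a ^ 2)) /
      (1 / Real.cosh a ^ 2 + 2 * Real.tanh a * g + h)) := by
    rw [neg_div' , eq_div_iff hD]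
    exact key
  linarith [h2]
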